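/- Assume β ∈ [0,1] and M > 6. There exists a constant C > 0 (depending only on β and M) such that for all ω₁ > 1 one has C₂₂²³⁴[n⁰¹, n⁰¹, n⁰¹](ω₁) ≤ C · ω₁^{3β + 1/2 − M}. -/
import Mathlib


open MeasureTheory Real

noncomputable section

/-- Japanese bracket ⟨ω⟩ = (1 + ω²)^{1/2}. -/
def jb (ω : ℝ) : ℝ := Real.sqrt (1 + ω ^ 2)

/-- n⁰¹(ω) = ⟨ω⟩^{-M/2}. -/
def n01 (M : ℝ) (ω : ℝ) : ℝ := jb ω ^ (-(M / 2))

/-- The operator C₂₁²³⁴, with ω₂ = ω₃ + ω₄ − ω₁. -/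
def C21op (β : ℝ) (k l m : ℝ → ℝ) (ω₁ : ℝ) : ℝ :=
  64 * π ^ 3 * ω₁ ^ (β - 1/2) *
    ∫ ω₃ in (0:ℝ)..(ω₁ / 2), ∫ ω₄ in (ω₁ - ω₃)..ω₁,
      (ω₃ + ω₄ - ω₁) ^ (β + 1/2) * ω₃ ^ β * ω₄ ^ β *
        (k (ω₃ + ω₄ - ω₁) * l ω₃ * m ω₄)

/-- The operator C₂₂²³⁴, with ω₂ = ω₃ + ω₄ − ω₁. -/
def C22op (β : ℝ) (k l m : ℝ → ℝ) (ω₁ : ℝ) : ℝ :=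
  64 * π ^ 3 * ω₁ ^ (β - 1/2) *
    ∫ ω₃ in (ω₁ / 2)..ω₁, ∫ ω₄ in ω₃..ω₁,
      (ω₃ + ω₄ - ω₁) ^ (β + 1/2) * ω₃ ^ β * ω₄ ^ β *
        (k (ω₃ + ω₄ - ω₁) * l ω₃ * m ω₄)

/-- The operator C₃²³⁴, with ω₂ = ω₃ + ω₄ − ω₁. -/
def C3op (β : ℝ) (k l m : ℝ → ℝ) (ω₁ : ℝ) : ℝ :=
  64 * π ^ 3 * ω₁ ^ (β - 1/2) *
    ∫ ω₃ in (0:ℝ)..ω₁, ∫ ω₄ in Set.Ioi ω₁,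
      (ω₃ + ω₄ - ω₁) ^ β * ω₃ ^ (β + 1/2) * ω₄ ^ β *
        (k (ω₃ + ω₄ - ω₁) * l ω₃ * m ω₄)

/-- The operator C₁²³⁴, with ω₂ = ω₃ + ω₄ − ω₁. -/
def C1op (β : ℝ) (k l m : ℝ → ℝ) (ω₁ : ℝ) : ℝ :=
  64 * π ^ 3 * ω₁ ^ β *
    ∫ ω₃ in Set.Ioi ω₁, ∫ ω₄ in Set.Ioi ω₃,
      (ω₃ + ω₄ - ω₁) ^ β * ω₃ ^ β * ω₄ ^ β *
        (k (ω₃ + ω₄ - ω₁) * l ω₃ * m ω₄)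

/-- The full domain of integration {0 ≤ ω₃ ≤ ω₄, ω₃ + ω₄ ≥ ω₁} ⊂ ℝ². -/
def Dom (ω₁ : ℝ) : Set (ℝ × ℝ) := {p | 0 ≤ p.1 ∧ p.1 ≤ p.2 ∧ ω₁ ≤ p.1 + p.2}

/-- The cross-section factor min{√ω₁, √ω₂, √ω₃}, with ω₂ = ω₃ + ω₄ − ω₁,
where p = (ω₃, ω₄). -/
def crossMin (ω₁ : ℝ) (p : ℝ × ℝ) : ℝ :=
  min (Real.sqrt ω₁) (min (Real.sqrt (p.1 + p.2 - ω₁)) (Real.sqrt p.1))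

/-- The operator C^{j₁j₂j₃}[k,l,m](ω₁) where the factor is k(ω_{j₁}) l(ω_{j₂}) m(ω_{j₃}),
with ω₂ = ω₃ + ω₄ − ω₁ and p = (ω₃, ω₄); here the selection of frequencies is passed
as a function `sel : (ℝ × ℝ) → ℝ × ℝ × ℝ` giving (ω_{j₁}, ω_{j₂}, ω_{j₃}). -/
def Cfull (β : ℝ) (k l m : ℝ → ℝ) (sel : ℝ → ℝ × ℝ → ℝ × ℝ × ℝ) (ω₁ : ℝ) : ℝ :=
  64 * π ^ 3 * ω₁ ^ (β - 1/2) *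
    ∫ p in Dom ω₁,
      ((p.1 + p.2 - ω₁) * p.1 * p.2) ^ β * crossMin ω₁ p *
        (k (sel ω₁ p).1 * l (sel ω₁ p).2.1 * m (sel ω₁ p).2.2)

/-- C²³⁴[k,l,m](ω₁): integrand k(ω₂) l(ω₃) m(ω₄). -/
def C234 (β : ℝ) (k l m : ℝ → ℝ) : ℝ → ℝ :=
  Cfull β k l m (fun ω₁ p => (p.1 + p.2 - ω₁, p.1, p.2))

/-- C¹²⁴[k,l,m](ω₁): integrand k(ω₁) l(ω₂) m(ω₄). -/
def C124 (β : ℝ) (k l m : ℝ → ℝ) : ℝ → ℝ :=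
  Cfull β k l m (fun ω₁ p => (ω₁, p.1 + p.2 - ω₁, p.2))

/-- C¹³⁴[k,l,m](ω₁): integrand k(ω₁) l(ω₃) m(ω₄). -/
def C134 (β : ℝ) (k l m : ℝ → ℝ) : ℝ → ℝ :=
  Cfull β k l m (fun ω₁ p => (ω₁, p.1, p.2))

/-- C¹²³[k,l,m](ω₁): integrand k(ω₁) l(ω₂) m(ω₃). -/
def C123 (β : ℝ) (k l m : ℝ → ℝ) : ℝ → ℝ :=
  Cfull β k l m (fun ω₁ p => (ω₁, p.1 + p.2 - ω₁, p.1))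

namespace C22aux


lemma jb_pos (ω : ℝ) : 0 < jb ω := Real.sqrt_pos.2 (by positivity)

lemma one_le_jb (ω : ℝ) : 1 ≤ jb ω := by
  have h := Real.sqrt_le_sqrt (show (1:ℝ) ≤ 1 + ω ^ 2 by nlinarith [sq_nonneg ω])
  rwa [Real.sqrt_one] at h

lemma le_jb {ω : ℝ} (h : 0 ≤ ω) : ω ≤ jb ω := by
  rw [jb]
  nlinarith [Real.sq_sqrt (show (0:ℝ) ≤ 1 + ω ^ 2 by positivity),
    Real.sqrt_nonneg (1 + ω ^ 2)]

lemma n01_nonneg (M ω : ℝ) : 0 ≤ n01 M ω := Real.rpow_nonneg (jb_pos ω).le _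

lemma n01_le {M a t : ℝ} (hM : 0 ≤ M) (ha : 0 < a) (hat : a ≤ t) :
    n01 M t ≤ a ^ (-(M / 2)) := by
  have h1 : a ≤ jb t := hat.trans (le_jb (ha.le.trans hat))
  exact Real.rpow_le_rpow_of_nonpos ha h1 (by linarith)

lemma n01_le_one {M : ℝ} (hM : 0 ≤ M) (ω : ℝ) : n01 M ω ≤ 1 :=
  Real.rpow_le_one_of_one_le_of_nonpos (one_le_jb ω) (by linarith)

/-- dominating function -/
def gfun (x : ℝ) : ℝ := min 1 (x ^ (-(3/2) : ℝ))

lemma gfun_nonneg {x : ℝ} (hx : 0 ≤ x) : 0 ≤ gfun x :=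
  le_min zero_le_one (Real.rpow_nonneg hx _)

lemma gfun_le_one (x : ℝ) : gfun x ≤ 1 := min_le_left _ _

lemma key_pointwise {β M x : ℝ} (hβ0 : 0 ≤ β) (hβ1 : β ≤ 1) (hM : 6 < M)
    (hx : 0 ≤ x) : x ^ (β + 1/2) * n01 M x ≤ gfun x := by
  have hM0 : (0:ℝ) ≤ M := by linarith
  have haux1 : x ≤ 1 → x ^ (β + 1/2) * n01 M x ≤ 1 := by
    intro h1
    have := Real.rpow_le_one hx h1 (by linarith : (0:ℝ) ≤ β + 1/2)
    have := n01_le_one hM0 x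
    nlinarith [Real.rpow_nonneg hx (β + 1/2), n01_nonneg M x]
  have haux2 : 1 ≤ x → x ^ (β + 1/2) * n01 M x ≤ x ^ (β + 1/2 - M/2) := by
    intro h1
    have hxpos : (0:ℝ) < x := by linarith
    have hn : n01 M x ≤ x ^ (-(M/2)) := n01_le hM0 hxpos le_rfl
    calc x ^ (β + 1/2) * n01 M x ≤ x ^ (β + 1/2) * x ^ (-(M/2)) :=
          mul_le_mul_of_nonneg_left hn (Real.rpow_nonneg hx _)
      _ = x ^ (β + 1/2 - M/2) := by
          rw [← Real.rpow_add hxpos]; ring_nf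
  refine le_min ?_ ?_
  · rcases le_or_gt x 1 with h1 | h1
    · exact haux1 h1
    · exact (haux2 h1.le).trans
        (Real.rpow_le_one_of_one_le_of_nonpos h1.le (by linarith))
  · rcases eq_or_lt_of_le hx with h0 | h0
    · rw [← h0, Real.zero_rpow (by norm_num : (-(3/2):ℝ) ≠ 0),
        Real.zero_rpow (by positivity : β + 1/2 ≠ 0)]
      simp [n01]
    · rcases le_or_gt x 1 with h1 | h1
      · exact (haux1 h1).trans
          (Real.one_le_rpow_of_pos_of_le_one_of_nonpos h0 h1 (by norm_num))
      · exact (haux2 h1.le).trans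
          (Real.rpow_le_rpow_of_exponent_le h1.le (by linarith))

lemma gfun_integrable : IntegrableOn gfun (Set.Ioi 0) := by
  have hmeas : Measurable gfun := by unfold gfun; fun_prop
  rw [← Set.Ioc_union_Ioi_eq_Ioi (zero_le_one : (0:ℝ) ≤ 1)]
  apply IntegrableOn.union
  · apply Measure.integrableOn_of_bounded (M := 1)
    · simp [measure_Ioc_lt_top.ne]
    · exact hmeas.aestronglyMeasurable
    · refine (ae_restrict_iff' measurableSet_Ioc).2 (Filter.Eventually.of_forall ?_)
      intro x hx
      rw [Real.norm_eq_abs, abs_of_nonneg (gfun_nonneg hx.1.le)]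
      exact gfun_le_one x
  · apply Integrable.mono (integrableOn_Ioi_rpow_of_lt (show (-(3/2):ℝ) < -1 by norm_num)
      one_pos) hmeas.aestronglyMeasurable.restrict
    refine (ae_restrict_iff' measurableSet_Ioi).2 (Filter.Eventually.of_forall ?_)
    intro x hx
    rw [Real.norm_eq_abs, abs_of_nonneg (gfun_nonneg (by linarith [hx.out] : (0:ℝ) ≤ x)),
      Real.norm_eq_abs, abs_of_nonneg (Real.rpow_nonneg (by linarith [hx.out]) _)]
    exact min_le_right _ _

def Ig : ℝ := ∫ x in Set.Ioi (0:ℝ), gfun x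

lemma Ig_nonneg : 0 ≤ Ig :=
  setIntegral_nonneg measurableSet_Ioi fun x hx => gfun_nonneg (le_of_lt hx)

lemma continuous_jb : Continuous jb :=
  Real.continuous_sqrt.comp (by continuity)

lemma continuous_n01 (M : ℝ) : Continuous (n01 M) := by
  rw [continuous_iff_continuousAt]
  intro ω
  exact (Real.continuousAt_rpow_const _ _ (Or.inl (jb_pos ω).ne')).comp
    continuous_jb.continuousAt

lemma continuous_rpow_const {p : ℝ} (hp : 0 ≤ p) : Continuous fun x : ℝ => x ^ p := by
  rw [continuous_iff_continuousAt]
  intro x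
  exact Real.continuousAt_rpow_const x p (Or.inr hp)


lemma inner_bound {β M : ℝ} (hβ0 : 0 ≤ β) (hβ1 : β ≤ 1) (hM : 6 < M)
    {ω₁ ω₃ : ℝ} (h1 : 1 < ω₁) (h3 : ω₁ / 2 ≤ ω₃) (h31 : ω₃ ≤ ω₁) :
    (∫ ω₄ in ω₃..ω₁,
      (ω₃ + ω₄ - ω₁) ^ (β + 1/2) * ω₃ ^ β * ω₄ ^ β *
        (n01 M (ω₃ + ω₄ - ω₁) * n01 M ω₃ * n01 M ω₄))
      ≤ Ig * ((ω₁ ^ β * (ω₁ / 2) ^ (-(M / 2))) * (ω₁ ^ β * (ω₁ / 2) ^ (-(M / 2)))) := by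
  have hM0 : (0:ℝ) ≤ M := by linarith
  have hω₁ : (0:ℝ) < ω₁ := by linarith
  have hhalf : (0:ℝ) < ω₁ / 2 := by linarith
  have hω₃ : (0:ℝ) < ω₃ := lt_of_lt_of_le hhalf h3
  set A := ω₁ ^ β * (ω₁ / 2) ^ (-(M / 2)) with hA
  have hA0 : 0 ≤ A := mul_nonneg (Real.rpow_nonneg hω₁.le _) (Real.rpow_nonneg hhalf.le _)
  -- pointwise bound
  have hpt : ∀ ω₄ ∈ Set.Icc ω₃ ω₁,
      (ω₃ + ω₄ - ω₁) ^ (β + 1/2) * ω₃ ^ β * ω₄ ^ β *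
        (n01 M (ω₃ + ω₄ - ω₁) * n01 M ω₃ * n01 M ω₄)
      ≤ gfun (ω₃ + ω₄ - ω₁) * (A * A) := by
    intro ω₄ h4
    obtain ⟨h4l, h4r⟩ := h4
    have hω₂ : 0 ≤ ω₃ + ω₄ - ω₁ := by linarith
    have b1 : (ω₃ + ω₄ - ω₁) ^ (β + 1/2) * n01 M (ω₃ + ω₄ - ω₁) ≤ gfun (ω₃ + ω₄ - ω₁) :=
      key_pointwise hβ0 hβ1 hM hω₂
    have b2 : ω₃ ^ β * n01 M ω₃ ≤ A :=
      mul_le_mul (Real.rpow_le_rpow hω₃.le h31 hβ0) (n01_le hM0 hhalf h3)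
        (n01_nonneg M ω₃) (Real.rpow_nonneg hω₁.le _)
    have b3 : ω₄ ^ β * n01 M ω₄ ≤ A :=
      mul_le_mul (Real.rpow_le_rpow (hω₃.le.trans h4l) h4r hβ0)
        (n01_le hM0 hhalf (h3.trans h4l)) (n01_nonneg M ω₄) (Real.rpow_nonneg hω₁.le _)
    have e : (ω₃ + ω₄ - ω₁) ^ (β + 1/2) * ω₃ ^ β * ω₄ ^ β *
        (n01 M (ω₃ + ω₄ - ω₁) * n01 M ω₃ * n01 M ω₄)
      = ((ω₃ + ω₄ - ω₁) ^ (β + 1/2) * n01 M (ω₃ + ω₄ - ω₁)) *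
        ((ω₃ ^ β * n01 M ω₃) * (ω₄ ^ β * n01 M ω₄)) := by ring
    rw [e]
    have hyz : 0 ≤ (ω₃ ^ β * n01 M ω₃) * (ω₄ ^ β * n01 M ω₄) :=
      mul_nonneg (mul_nonneg (Real.rpow_nonneg hω₃.le _) (n01_nonneg M ω₃))
        (mul_nonneg (Real.rpow_nonneg (hω₃.le.trans h4l) _) (n01_nonneg M ω₄))
    have hbb : (ω₃ ^ β * n01 M ω₃) * (ω₄ ^ β * n01 M ω₄) ≤ A * A :=
      mul_le_mul b2 b3 (mul_nonneg (Real.rpow_nonneg (hω₃.le.trans h4l) _)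
        (n01_nonneg M ω₄)) hA0
    exact mul_le_mul b1 hbb hyz (gfun_nonneg hω₂)
  -- integrability of LHS
  have hInt1 : IntervalIntegrable (fun ω₄ =>
      (ω₃ + ω₄ - ω₁) ^ (β + 1/2) * ω₃ ^ β * ω₄ ^ β *
        (n01 M (ω₃ + ω₄ - ω₁) * n01 M ω₃ * n01 M ω₄)) volume ω₃ ω₁ := by
    apply ContinuousOn.intervalIntegrable
    intro x hx
    rw [Set.uIcc_of_le h31] at hx
    have hx0 : 0 < x := lt_of_lt_of_le hω₃ hx.1
    apply ContinuousAt.continuousWithinAt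
    have c2 : ContinuousAt (fun y : ℝ => (ω₃ + y - ω₁) ^ (β + 1/2)) x :=
      ((continuous_rpow_const (by linarith : (0:ℝ) ≤ β + 1/2)).comp
        (by continuity : Continuous fun y : ℝ => ω₃ + y - ω₁)).continuousAt
    have c4 : ContinuousAt (fun y : ℝ => y ^ β) x :=
      Real.continuousAt_rpow_const _ _ (Or.inl hx0.ne')
    have c5 : ContinuousAt (fun y : ℝ => n01 M (ω₃ + y - ω₁)) x :=
      ((continuous_n01 M).comp
        (by continuity : Continuous fun y : ℝ => ω₃ + y - ω₁)).continuousAt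
    exact ((c2.mul continuousAt_const).mul c4).mul
      ((c5.mul continuousAt_const).mul (continuous_n01 M).continuousAt)
  -- integrability of dominating function
  have hgshift : IntervalIntegrable (fun x => gfun (x + (ω₃ - ω₁))) volume ω₃ ω₁ := by
    have hbase : IntervalIntegrable gfun volume (ω₃ + (ω₃ - ω₁)) (ω₁ + (ω₃ - ω₁)) := by
      rw [intervalIntegrable_iff_integrableOn_Ioc_of_le (by linarith)]
      apply gfun_integrable.mono_set
      intro x hx
      exact lt_of_le_of_lt (by linarith) hx.1
    have h' := hbase.comp_add_right (ω₃ - ω₁)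
    simpa using h'
  have hfun_eq : (fun ω₄ => gfun (ω₃ + ω₄ - ω₁) * (A * A))
      = fun x => gfun (x + (ω₃ - ω₁)) * (A * A) := by
    funext x; congr 2; ring
  have step1 : (∫ ω₄ in ω₃..ω₁,
      (ω₃ + ω₄ - ω₁) ^ (β + 1/2) * ω₃ ^ β * ω₄ ^ β *
        (n01 M (ω₃ + ω₄ - ω₁) * n01 M ω₃ * n01 M ω₄))
      ≤ ∫ ω₄ in ω₃..ω₁, gfun (ω₃ + ω₄ - ω₁) * (A * A) := by
    apply intervalIntegral.integral_mono_on h31 hInt1 _ hpt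
    rw [hfun_eq]
    exact hgshift.mul_const _
  refine step1.trans ?_
  rw [hfun_eq, intervalIntegral.integral_mul_const,
    intervalIntegral.integral_comp_add_right gfun (ω₃ - ω₁)]
  apply mul_le_mul_of_nonneg_right _ (mul_nonneg hA0 hA0)
  rw [intervalIntegral.integral_of_le (by linarith : ω₃ + (ω₃ - ω₁) ≤ ω₁ + (ω₃ - ω₁))]
  apply setIntegral_mono_set gfun_integrable
  · exact (ae_restrict_iff' measurableSet_Ioi).2
      (Filter.Eventually.of_forall fun x hx => gfun_nonneg (le_of_lt hx))
  · refine HasSubset.Subset.eventuallyLE ?_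
    intro x hx
    exact lt_of_le_of_lt (by linarith) hx.1


end C22aux

/-- Upper bound: C₂₂²³⁴[n⁰¹,n⁰¹,n⁰¹](ω₁) ≲ ω₁^{3β + 1/2 − M} for ω₁ > 1. -/
theorem C22_upper_bound (β M : ℝ) (hβ0 : 0 ≤ β) (hβ1 : β ≤ 1) (hM : 6 < M) :
    ∃ C : ℝ, 0 < C ∧ ∀ ω₁ : ℝ, 1 < ω₁ →
      C22op β (n01 M) (n01 M) (n01 M) ω₁ ≤ C * ω₁ ^ (3 * β + 1/2 - M) := by
  refine ⟨32 * π ^ 3 * 2 ^ M * C22aux.Ig + 1, ?_, ?_⟩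
  · have h1 : 0 ≤ 32 * π ^ 3 * (2:ℝ) ^ M * C22aux.Ig :=
      mul_nonneg (by positivity) C22aux.Ig_nonneg
    linarith
  intro ω₁ hω₁
  have hpos : (0:ℝ) < ω₁ := by linarith
  have hhalf : (0:ℝ) < ω₁ / 2 := by linarith
  have hIg := C22aux.Ig_nonneg
  set A := ω₁ ^ β * (ω₁ / 2) ^ (-(M / 2)) with hAdef
  have hA0 : 0 ≤ A := mul_nonneg (Real.rpow_nonneg hpos.le _) (Real.rpow_nonneg hhalf.le _)
  -- bound on the double integral
  have hJ : (∫ ω₃ in (ω₁ / 2)..ω₁, ∫ ω₄ in ω₃..ω₁,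
        (ω₃ + ω₄ - ω₁) ^ (β + 1/2) * ω₃ ^ β * ω₄ ^ β *
          (n01 M (ω₃ + ω₄ - ω₁) * n01 M ω₃ * n01 M ω₄))
      ≤ C22aux.Ig * (A * A) * (ω₁ - ω₁ / 2) := by
    have hbd : ∀ x ∈ Set.uIoc (ω₁ / 2) ω₁,
        ‖∫ ω₄ in x..ω₁,
          (x + ω₄ - ω₁) ^ (β + 1/2) * x ^ β * ω₄ ^ β *
            (n01 M (x + ω₄ - ω₁) * n01 M x * n01 M ω₄)‖ ≤ C22aux.Ig * (A * A) := by
      intro x hx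
      rw [Set.uIoc_of_le (by linarith : ω₁ / 2 ≤ ω₁)] at hx
      obtain ⟨hxl, hxr⟩ := hx
      have hnn : 0 ≤ ∫ ω₄ in x..ω₁,
          (x + ω₄ - ω₁) ^ (β + 1/2) * x ^ β * ω₄ ^ β *
            (n01 M (x + ω₄ - ω₁) * n01 M x * n01 M ω₄) := by
        apply intervalIntegral.integral_nonneg hxr
        intro u hu
        have h2 : (0:ℝ) ≤ x + u - ω₁ := by
          have := hu.1; linarith
        have hx0 : (0:ℝ) ≤ x := by linarith
        have hu0 : (0:ℝ) ≤ u := by have := hu.1; linarith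
        apply mul_nonneg
        apply mul_nonneg
        apply mul_nonneg (Real.rpow_nonneg h2 _) (Real.rpow_nonneg hx0 _)
        exact Real.rpow_nonneg hu0 _
        exact mul_nonneg (mul_nonneg (C22aux.n01_nonneg _ _) (C22aux.n01_nonneg _ _))
          (C22aux.n01_nonneg _ _)
      rw [Real.norm_eq_abs, abs_of_nonneg hnn]
      exact C22aux.inner_bound hβ0 hβ1 hM hω₁ hxl.le hxr
    have hnorm := intervalIntegral.norm_integral_le_of_norm_le_const hbd
    rw [Real.norm_eq_abs] at hnorm
    have habs : |ω₁ - ω₁ / 2| = ω₁ - ω₁ / 2 := abs_of_nonneg (by linarith)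
    rw [habs] at hnorm
    calc (∫ ω₃ in (ω₁ / 2)..ω₁, ∫ ω₄ in ω₃..ω₁,
        (ω₃ + ω₄ - ω₁) ^ (β + 1/2) * ω₃ ^ β * ω₄ ^ β *
          (n01 M (ω₃ + ω₄ - ω₁) * n01 M ω₃ * n01 M ω₄))
        ≤ |∫ ω₃ in (ω₁ / 2)..ω₁, ∫ ω₄ in ω₃..ω₁,
        (ω₃ + ω₄ - ω₁) ^ (β + 1/2) * ω₃ ^ β * ω₄ ^ β *
          (n01 M (ω₃ + ω₄ - ω₁) * n01 M ω₃ * n01 M ω₄)| := le_abs_self _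
      _ ≤ C22aux.Ig * (A * A) * (ω₁ - ω₁ / 2) := hnorm
  have hfac : (0:ℝ) ≤ 64 * π ^ 3 * ω₁ ^ (β - 1/2) := by positivity
  have h2 : (ω₁ / 2 : ℝ) ^ (-(M / 2)) = ω₁ ^ (-(M / 2)) * 2 ^ (M / 2) := by
    rw [Real.div_rpow hpos.le (by norm_num : (0:ℝ) ≤ 2),
      Real.rpow_neg (by norm_num : (0:ℝ) ≤ 2)]
    field_simp
  have e1 : ω₁ ^ (3 * β + 1/2 - M)
      = ω₁ ^ (β - 1/2) * ω₁ ^ β * ω₁ ^ β * ω₁ ^ (-(M / 2)) * ω₁ ^ (-(M / 2)) * ω₁ := by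
    rw [show (3 * β + 1/2 - M) = (β - 1/2) + β + β + (-(M / 2)) + (-(M / 2)) + 1 by ring,
      Real.rpow_add_one hpos.ne', Real.rpow_add hpos, Real.rpow_add hpos,
      Real.rpow_add hpos, Real.rpow_add hpos]
  have e2 : (2:ℝ) ^ M = 2 ^ (M / 2) * 2 ^ (M / 2) := by
    rw [← Real.rpow_add two_pos]; congr 1; ring
  calc C22op β (n01 M) (n01 M) (n01 M) ω₁
      = 64 * π ^ 3 * ω₁ ^ (β - 1/2) *
        ∫ ω₃ in (ω₁ / 2)..ω₁, ∫ ω₄ in ω₃..ω₁,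
          (ω₃ + ω₄ - ω₁) ^ (β + 1/2) * ω₃ ^ β * ω₄ ^ β *
            (n01 M (ω₃ + ω₄ - ω₁) * n01 M ω₃ * n01 M ω₄) := rfl
    _ ≤ 64 * π ^ 3 * ω₁ ^ (β - 1/2) * (C22aux.Ig * (A * A) * (ω₁ - ω₁ / 2)) :=
        mul_le_mul_of_nonneg_left hJ hfac
    _ = 32 * π ^ 3 * 2 ^ M * C22aux.Ig * ω₁ ^ (3 * β + 1/2 - M) := by
        rw [hAdef, h2, e1, e2]; ring
    _ ≤ (32 * π ^ 3 * 2 ^ M * C22aux.Ig + 1) * ω₁ ^ (3 * β + 1/2 - M) := by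
        have := Real.rpow_pos_of_pos hpos (3 * β + 1/2 - M)
        nlinarith
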